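/- Let φ be an endomorphism of a finite abelian group G, and let P = {g ∈ G : φ^n(g) = g for some n ≥ 1} be the set of periodic elements of φ; φ restricts to a permutation of P. Then for every complex z with |z| < 1, exp(Σ_{n≥1} (R(φ^n)/n) z^n) = ∏_{[γ]} (1 − z^{#[γ]})^{−1}, where the product is taken over all φ-orbits [γ] of periodic elements of G and #[γ] denotes the cardinality of the orbit. -/

import Mathlib

/-!
For abelian `G`, twisted conjugation by `γ` is translation by `γ / ψ γ`, so the Reidemeister
classes of `ψ` are the cosets of the image of `g ↦ g / ψ g`; in a finite group the index of the
image of an endomorphism equals the order of its kernel, the fixed points of `ψ`. Thus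
`R(φ^m) = #Fix(φ^m)`, and `Fix(φ^m)` is the union of the periodic orbits whose length `d` divides
`m`. The zeta series therefore splits into one series per orbit, `∑ₖ z^(d k) / k = -log (1 - z^d)`.
-/

/-- The set of Reidemeister (`φ`-twisted conjugacy) classes of an endomorphism `φ` of a
group `G`: `α'` is `φ`-conjugate to `α` iff `α' = γ * α * (φ γ)⁻¹` for some `γ ∈ G`. -/
def ReidemeisterSet {G : Type*} [Group G] (φ : Monoid.End G) : Type _ :=
  Quot (fun a b : G => ∃ γ : G, b = γ * a * (φ γ)⁻¹)

open Function

section Reidemeister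

variable {G : Type*} [CommGroup G]

def reidemeisterSetEquivQuotientRange (ψ : Monoid.End G) :
    ReidemeisterSet ψ ≃ G ⧸ (MonoidHom.id G / MonoidHomClass.toMonoidHom ψ).range :=
  Quot.congrRight fun a b => by
    have twist : ∀ γ, γ * a * (ψ γ)⁻¹ = a * (γ / ψ γ) := fun γ => by
      rw [div_eq_mul_inv, mul_comm γ a, mul_assoc]
    simp only [QuotientGroup.leftRel_apply, MonoidHom.mem_range, MonoidHom.div_apply,
      MonoidHom.id_apply, MonoidHom.coe_coe, twist, eq_inv_mul_iff_mul_eq]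
    exact exists_congr fun γ => eq_comm

theorem card_reidemeisterSet_eq_card_fixedPoints [Finite G] (ψ : Monoid.End G) :
    Nat.card (ReidemeisterSet ψ) = Nat.card (fixedPoints ψ) := by
  rw [Nat.card_congr (reidemeisterSetEquivQuotientRange ψ), ← Subgroup.index_eq_card,
    Subgroup.index_range]
  exact Nat.card_congr (Equiv.subtypeEquivRight fun g => div_eq_one.trans eq_comm)

end Reidemeister

section PeriodicOrbits

variable {α : Type*} {f : α → α}

theorem card_range_iterate_eq_minimalPeriod {x : α} (hx : x ∈ periodicPts f) :
    Nat.card (Set.range (f^[·] x)) = minimalPeriod f x := by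
  have hrange : Set.range (f^[·] x) = (f^[·] x) '' Set.Iio (minimalPeriod f x) := by
    refine (Set.image_subset_range _ _).antisymm' ?_
    rintro _ ⟨n, rfl⟩
    exact ⟨n % minimalPeriod f x, Nat.mod_lt _ (minimalPeriod_pos_of_mem_periodicPts hx),
      iterate_mod_minimalPeriod_eq⟩
  rw [hrange, Nat.card_image_of_injOn iterate_injOn_Iio_minimalPeriod, Nat.card_coe_set_eq,
    Set.ncard_Iio_nat]

theorem card_fixedPoints_iterate_eq_sum [Fintype α] (S : Finset α)
    (hS_per : ∀ γ ∈ S, γ ∈ periodicPts f)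
    (hS_rep : ∀ x ∈ periodicPts f, ∃! γ, γ ∈ S ∧ x ∈ Set.range (f^[·] γ)) {m : ℕ} (hm : m ≠ 0) :
    Nat.card (fixedPoints f^[m]) =
      ∑ γ ∈ S, if minimalPeriod f γ ∣ m then minimalPeriod f γ else 0 := by
  classical
  set orbit : α → Finset α := fun γ => (Set.range (f^[·] γ)).toFinset
  have fixed_iff {γ : α} (hγ : γ ∈ periodicPts f) (k : ℕ) :
      f^[k] γ ∈ fixedPoints f^[m] ↔ minimalPeriod f γ ∣ m := by
    rw [mem_fixedPoints, ← IsPeriodicPt, isPeriodicPt_iff_minimalPeriod_dvd,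
      minimalPeriod_apply_iterate hγ]
  have hunion : (fixedPoints f^[m]).toFinset =
      (S.filter fun γ => minimalPeriod f γ ∣ m).biUnion orbit := by
    ext x
    simp only [Set.mem_toFinset, Finset.mem_biUnion, Finset.mem_filter, orbit]
    constructor
    · intro hx
      obtain ⟨γ, ⟨hγS, k, rfl⟩, -⟩ := hS_rep x (mk_mem_periodicPts (Nat.pos_of_ne_zero hm) hx)
      exact ⟨γ, ⟨hγS, (fixed_iff (hS_per γ hγS) k).1 hx⟩, k, rfl⟩
    · rintro ⟨γ, ⟨hγS, hγ⟩, k, rfl⟩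
      exact (fixed_iff (hS_per γ hγS) k).2 hγ
  have hdisj : (S.filter fun γ => minimalPeriod f γ ∣ m : Set α).PairwiseDisjoint orbit := by
    intro γ hγ γ' hγ' hne
    obtain ⟨hγS, hγ⟩ := Finset.mem_filter.1 hγ
    have hγ'S := (Finset.mem_filter.1 hγ').1
    refine Finset.disjoint_left.2 fun x hx hx' => hne ?_
    rw [Set.mem_toFinset] at hx hx'
    obtain ⟨k, rfl⟩ := hx
    have hfix := (fixed_iff (hS_per γ hγS) k).2 hγ
    exact (hS_rep _ (mk_mem_periodicPts (Nat.pos_of_ne_zero hm) hfix)).unique ⟨hγS, k, rfl⟩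
      ⟨hγ'S, hx'⟩
  rw [Nat.card_eq_card_toFinset, hunion, Finset.card_biUnion hdisj, Finset.sum_filter]
  refine Finset.sum_congr rfl fun γ hγS => ?_
  rw [← Nat.card_eq_card_toFinset, card_range_iterate_eq_minimalPeriod (hS_per γ hγS)]

end PeriodicOrbits

section Series

open Complex

theorem hasSum_neg_log_one_sub_pow {d : ℕ} (hd : d ≠ 0) {z : ℂ} (hz : ‖z‖ < 1) :
    HasSum (fun n : ℕ => (if d ∣ n + 1 then (d : ℂ) else 0) / ((n : ℂ) + 1) * z ^ (n + 1))
      (-log (1 - z ^ d)) := by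
  have hzd : ‖z ^ d‖ < 1 := by
    rw [norm_pow]
    exact pow_lt_one₀ (norm_nonneg z) hz hd
  have hmultiples : HasSum (fun m : ℕ => (if d ∣ m then (d : ℂ) else 0) / m * z ^ m)
      (-log (1 - z ^ d)) := by
    -- only the multiples `m = d * k` contribute, with the `k`-th term of the series of the log
    refine (Injective.hasSum_iff (mul_right_injective₀ hd) fun m hm => ?_).1 ?_
    · rw [if_neg fun ⟨k, hk⟩ => hm ⟨k, hk.symm⟩, zero_div, zero_mul]
    · convert hasSum_taylorSeries_neg_log hzd using 2 with k
      have hd' : (d : ℂ) ≠ 0 := Nat.cast_ne_zero.2 hd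
      simp only [comp_apply, dvd_mul_right, if_true, Nat.cast_mul, pow_mul]
      rw [div_mul_cancel_left₀ hd', inv_mul_eq_div]
  simpa using (hasSum_nat_add_iff' 1).2 hmultiples

theorem exp_tsum_eq_prod_inv_one_sub_pow {ι : Type*} (s : Finset ι) (d : ι → ℕ)
    (hd : ∀ i ∈ s, d i ≠ 0) {z : ℂ} (hz : ‖z‖ < 1) :
    exp (∑' n : ℕ, (∑ i ∈ s, if d i ∣ n + 1 then (d i : ℂ) else 0) / ((n : ℂ) + 1) * z ^ (n + 1))
      = ∏ i ∈ s, (1 - z ^ d i)⁻¹ := by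
  have hsum := hasSum_sum fun i hi => hasSum_neg_log_one_sub_pow (hd i hi) hz
  simp only [← Finset.sum_mul, ← Finset.sum_div] at hsum
  rw [hsum.tsum_eq, exp_sum]
  refine Finset.prod_congr rfl fun i hi => ?_
  have hne : 1 - z ^ d i ≠ 0 := sub_ne_zero.2 fun h => by
    simpa [← norm_pow, ← h] using pow_lt_one₀ (norm_nonneg z) hz (hd i hi)
  rw [exp_neg, exp_log hne]

end Series

/-- Let `φ` be an endomorphism of a finite abelian group `G` and let `S` be a
set of representatives of the `φ`-orbits of periodic elements of `φ`. Then for `|z| < 1`,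
`exp(Σ_{n≥1} R(φⁿ)/n · zⁿ) = ∏_{[γ]} (1 − z^{#[γ]})⁻¹`, the product being over all `φ`-orbits
of periodic elements. -/
theorem reidemeister_zeta_of_finite_abelian (G : Type*) [CommGroup G] [Fintype G]
    (φ : Monoid.End G) (S : Finset G)
    (hSper : ∀ γ ∈ S, ∃ n : ℕ, 1 ≤ n ∧ (φ ^ n) γ = γ)
    (hSrep : ∀ g : G, (∃ n : ℕ, 1 ≤ n ∧ (φ ^ n) g = g) →
      ∃! γ : G, γ ∈ S ∧ ∃ n : ℕ, (φ ^ n) γ = g)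
    (z : ℂ) (hz : ‖z‖ < 1) :
    Complex.exp (∑' n : ℕ,
        (Nat.card (ReidemeisterSet (φ ^ (n + 1))) : ℂ) / ((n : ℂ) + 1) * z ^ (n + 1)) =
      ∏ γ ∈ S, (1 - z ^ Nat.card {g : G // ∃ n : ℕ, (φ ^ n) γ = g})⁻¹ := by
  have hper : ∀ γ ∈ S, γ ∈ periodicPts φ := hSper
  have hR (n : ℕ) : (Nat.card (ReidemeisterSet (φ ^ (n + 1))) : ℂ) =
      ∑ γ ∈ S, if minimalPeriod φ γ ∣ n + 1 then (minimalPeriod φ γ : ℂ) else 0 := by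
    rw [card_reidemeisterSet_eq_card_fixedPoints, Monoid.End.coe_pow,
      card_fixedPoints_iterate_eq_sum S hper hSrep n.add_one_ne_zero]
    simp only [Nat.cast_sum, Nat.cast_ite, Nat.cast_zero]
  have horbit : ∀ γ ∈ S, Nat.card {g : G // ∃ n : ℕ, (φ ^ n) γ = g} = minimalPeriod φ γ :=
    fun γ hγ => card_range_iterate_eq_minimalPeriod (hper γ hγ)
  rw [Finset.prod_congr rfl fun γ hγ => by rw [horbit γ hγ]]
  simp only [hR]
  exact exp_tsum_eq_prod_inv_one_sub_pow S _
    (fun γ hγ => (minimalPeriod_pos_of_mem_periodicPts (hper γ hγ)).ne') hz
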